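/- Incidence-type matrix has full column rank: let G = (V, E) be a finite directed acyclic graph with no self-loops and with nonempty sets of input neurons V_in and output neurons V_out, and H = V \ (V_in ∪ V_out) the hidden neurons; assume every hidden neuron has at least one incoming and one outgoing edge. Define B ∈ ℝ^{E×H} by B_{e,h} = 1 if e = u→h for some u, B_{e,h} = −1 if e = h→v for some v, else 0. Then the columns of B are linearly independent; equivalently, Bz = 0 implies z = 0 for z ∈ ℝ^H. -/
import Mathlib

/-- Incidence-type matrix of a DAG has full column rank: for a finite DAG
(witnessed by a rank function increasing along edges) with no self-loops,
nonempty input and output sets, where every hidden neuron (neither input nor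
output) has at least one incoming and one outgoing edge, the map
`z ↦ (e ↦ z (tgt e) − z (src e))` (with `z` extended by `0` on non-hidden
neurons) is injective on `ℝ^H`: `Bz = 0` implies `z = 0`. -/
theorem incidence_matrix_full_column_rank
    {V E : Type*} [Fintype V] [Fintype E] [DecidableEq V]
    (src tgt : E → V) (hnoloop : ∀ e, src e ≠ tgt e)
    (rank : V → ℕ) (hdag : ∀ e, rank (src e) < rank (tgt e))
    (Vin Vout : Finset V) (hVin : Vin.Nonempty) (hVout : Vout.Nonempty)
    (hhidden : ∀ v : V, v ∉ Vin → v ∉ Vout →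
      (∃ e, tgt e = v) ∧ (∃ e, src e = v)) :
    ∀ z : V → ℝ, (∀ v ∈ Vin, z v = 0) → (∀ v ∈ Vout, z v = 0) →
      (∀ e, z (tgt e) - z (src e) = 0) → ∀ v, z v = 0 := by
  intro z hin hout hB
  have key : ∀ n, ∀ v, rank v < n → z v = 0 := by
    intro n
    induction n with
    | zero => intro v h; omega
    | succ n ih =>
      intro v hv
      by_cases h1 : v ∈ Vin
      · exact hin v h1
      by_cases h2 : v ∈ Vout
      · exact hout v h2
      obtain ⟨⟨e, he⟩, -⟩ := hhidden v h1 h2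
      have h3 := hB e
      have h4 := hdag e
      rw [he] at h3 h4
      have : z (src e) = 0 := ih (src e) (by omega)
      linarith
  intro v
  exact key (rank v + 1) v (by omega)
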